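/- Let p₁,...,p_M ≥ 0 with Σᵢ pᵢ = 1 and let m₁,...,m_M be positive integers. Define the block diagonal matrix K with i-th block equal to (pᵢ/mᵢ)·J_{mᵢ}, where J_{mᵢ} is the mᵢ×mᵢ all-ones matrix. Then K is a density matrix and VNE(K) = −Σᵢ pᵢ log pᵢ. -/

import Mathlib

open Matrix Polynomial
open scoped ComplexOrder

/-!
The spectrum of a block diagonal matrix is the union of the spectra of its blocks, as one sees
from its characteristic polynomial. The block `(pᵢ / mᵢ) • J` has rank at most one and trace `pᵢ`,
so its only possibly nonzero eigenvalue is `pᵢ`; since `x ↦ -x log x` vanishes at `0`, the block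
contributes exactly `-pᵢ log pᵢ` to the entropy.
-/

theorem Set.Subsingleton.sum_comp_eq_comp_sum {ι M N : Type*} [Fintype ι] [AddCommMonoid M]
    [AddCommMonoid N] {x : ι → M} (hx : (Function.support x).Subsingleton) {f : M → N}
    (hf : f 0 = 0) : ∑ j, f (x j) = f (∑ j, x j) := by
  by_cases h : ∃ i, x i ≠ 0
  · obtain ⟨i, hi⟩ := h
    have hzero : ∀ j ≠ i, x j = 0 := fun j hj => by
      by_contra hj'
      exact hj (hx hj' hi)
    rw [Fintype.sum_eq_single i fun j hj => by rw [hzero j hj, hf], Fintype.sum_eq_single i hzero]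
  · push Not at h
    simp [h, hf]

namespace Matrix

theorem charpoly_blockDiagonal' {o R : Type*} [Fintype o] [LinearOrder o] [CommRing R]
    {m : o → Type*} [∀ i, Fintype (m i)] [∀ i, DecidableEq (m i)]
    (B : ∀ i, Matrix (m i) (m i) R) :
    (blockDiagonal' B).charpoly = ∏ i, (B i).charpoly := by
  have hBT : (blockDiagonal' B).BlockTriangular Sigma.fst := fun i j h =>
    blockDiagonal'_apply_ne B _ _ h.ne'
  rw [hBT.charpoly]
  refine Finset.prod_subset (Finset.subset_univ _) (fun i _ hi => ?_) |>.trans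
    (Finset.prod_congr rfl fun i _ => ?_)
  -- an index outside the image of `Sigma.fst` carries an empty block, whose charpoly is `1`
  · have : IsEmpty {a : Σ i, m i // a.1 = i} :=
      ⟨fun a => hi (Finset.mem_image.mpr ⟨a.1, Finset.mem_univ _, a.2⟩)⟩
    exact charpoly_isEmpty
  · rw [← charpoly_reindex (Equiv.sigmaSubtype i)]
    congr 1
    ext j k
    exact blockDiagonal'_apply_eq B i j k

section ConstOne

variable {n R : Type*} [Fintype n] [CommRing R]

theorem posSemidef_smul_of_const_one [PartialOrder R] [StarRing R] [StarOrderedRing R] {c : R}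
    (hc : 0 ≤ c) : (c • of fun _ _ : n => (1 : R)).PosSemidef := by
  have h : of (fun _ _ : n => (1 : R)) = vecMulVec 1 (star 1) := by
    ext
    simp [vecMulVec]
  rw [h]
  exact (posSemidef_vecMulVec_self_star 1).smul hc

theorem rank_smul_of_const_one_le [StrongRankCondition R] (c : R) :
    (c • of fun _ _ : n => (1 : R)).rank ≤ 1 := by
  have h : c • of (fun _ _ : n => (1 : R)) = vecMulVec (fun _ => c) 1 := by
    ext
    simp [vecMulVec]
  rw [h]
  exact rank_vecMulVec_le _ _

end ConstOne

variable {𝕜 : Type*} [RCLike 𝕜]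

namespace IsHermitian

theorem sum_eigenvalues_comp_of_rank_le_one {n M : Type*} [Fintype n] [DecidableEq n]
    [AddCommMonoid M] {A : Matrix n n 𝕜} (hA : A.IsHermitian) (hr : A.rank ≤ 1) {f : ℝ → M}
    (hf : f 0 = 0) : ∑ j, f (hA.eigenvalues j) = f (RCLike.re A.trace) := by
  rw [hA.rank_eq_card_non_zero_eigs] at hr
  have hs : (Function.support hA.eigenvalues).Subsingleton := fun a ha b hb =>
    congrArg Subtype.val (Fintype.card_le_one_iff.mp hr ⟨a, ha⟩ ⟨b, hb⟩)
  rw [hs.sum_comp_eq_comp_sum hf, hA.trace_eq_sum_eigenvalues]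
  simp

variable {o : Type*} [Fintype o] [LinearOrder o] {m : o → Type*} [∀ i, Fintype (m i)]
  [∀ i, DecidableEq (m i)] {B : ∀ i, Matrix (m i) (m i) 𝕜}

theorem eigenvalues_blockDiagonal' (hB : ∀ i, (B i).IsHermitian)
    (hK : (blockDiagonal' B).IsHermitian) :
    Finset.univ.val.map hK.eigenvalues =
      Finset.univ.val.bind fun i => Finset.univ.val.map (hB i).eigenvalues := by
  apply Multiset.map_injective (RCLike.ofReal_injective (K := 𝕜))
  rw [Multiset.map_bind, Multiset.map_map, ← hK.roots_charpoly_eq_eigenvalues,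
    charpoly_blockDiagonal',
    roots_prod _ _ (Finset.prod_ne_zero_iff.mpr fun i _ => (B i).charpoly_monic.ne_zero)]
  refine Multiset.bind_congr fun i _ => ?_
  rw [Multiset.map_map, (hB i).roots_charpoly_eq_eigenvalues]

theorem sum_eigenvalues_blockDiagonal' {M : Type*} [AddCommMonoid M]
    (hB : ∀ i, (B i).IsHermitian) (hK : (blockDiagonal' B).IsHermitian) (f : ℝ → M) :
    ∑ j, f (hK.eigenvalues j) = ∑ i, ∑ j, f ((hB i).eigenvalues j) := by
  simpa [Multiset.map_bind, Multiset.sum_bind, Multiset.map_map] using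
    congrArg (fun s => (s.map f).sum) (hK.eigenvalues_blockDiagonal' hB)

end IsHermitian

theorem PosSemidef.blockDiagonal' {o : Type*} [Fintype o] [LinearOrder o] {m : o → Type*}
    [∀ i, Fintype (m i)] [∀ i, DecidableEq (m i)] {B : ∀ i, Matrix (m i) (m i) 𝕜}
    (hB : ∀ i, (B i).PosSemidef) : (blockDiagonal' B).PosSemidef := by
  have hK := isHermitian_blockDiagonal'_iff.mpr fun i => (hB i).1
  refine hK.posSemidef_iff_eigenvalues_nonneg.mpr fun j => ?_
  have hj := Multiset.mem_map_of_mem hK.eigenvalues (Finset.mem_univ j)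
  rw [hK.eigenvalues_blockDiagonal' fun i => (hB i).1] at hj
  obtain ⟨i, -, hi⟩ := Multiset.mem_bind.mp hj
  obtain ⟨k, -, hk⟩ := Multiset.mem_map.mp hi
  exact hk ▸ (hB i).eigenvalues_nonneg k

end Matrix

/-- The block diagonal matrix with i-th block (pᵢ/mᵢ)·J_{mᵢ} is a density matrix whose
von Neumann entropy equals the Shannon entropy −Σᵢ pᵢ log pᵢ. -/
theorem kle_generalizes_se {M : ℕ} (p : Fin M → ℝ) (m : Fin M → ℕ)
    (hp : ∀ i, 0 ≤ p i) (hsum : ∑ i, p i = 1) (hm : ∀ i, 0 < m i) :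
    (Matrix.blockDiagonal' fun i =>
        (p i / m i) • Matrix.of (fun _ _ : Fin (m i) => (1 : ℝ))).PosSemidef ∧
    (Matrix.blockDiagonal' fun i =>
        (p i / m i) • Matrix.of (fun _ _ : Fin (m i) => (1 : ℝ))).trace = 1 ∧
    ∀ hK : (Matrix.blockDiagonal' fun i =>
        (p i / m i) • Matrix.of (fun _ _ : Fin (m i) => (1 : ℝ))).IsHermitian,
      ∑ j, -(hK.eigenvalues j * Real.log (hK.eigenvalues j)) =
        -∑ i, p i * Real.log (p i) := by
  have hB i : ((p i / m i) • of fun _ _ : Fin (m i) => (1 : ℝ)).PosSemidef :=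
    posSemidef_smul_of_const_one (div_nonneg (hp i) (m i).cast_nonneg)
  have htrace i : ((p i / m i) • of fun _ _ : Fin (m i) => (1 : ℝ)).trace = p i := by
    have hmi : (m i : ℝ) ≠ 0 := Nat.cast_ne_zero.mpr (hm i).ne'
    simp [trace, mul_div_cancel₀ _ hmi]
  refine ⟨PosSemidef.blockDiagonal' hB, by rw [trace_blockDiagonal']; simp only [htrace, hsum], fun hK => ?_⟩
  calc ∑ j, -(hK.eigenvalues j * Real.log (hK.eigenvalues j))
      = ∑ i, ∑ j, Real.negMulLog ((hB i).1.eigenvalues j) := by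
        simpa [Real.negMulLog] using hK.sum_eigenvalues_blockDiagonal' (fun i => (hB i).1) Real.negMulLog
    _ = ∑ i, Real.negMulLog (p i) := by
        refine Finset.sum_congr rfl fun i _ => ?_
        rw [(hB i).1.sum_eigenvalues_comp_of_rank_le_one (rank_smul_of_const_one_le _)
          Real.negMulLog_zero, htrace]
        rfl
    _ = -∑ i, p i * Real.log (p i) := by simp [Real.negMulLog]
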